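/- If (x,y,z) ∈ ℤ³ satisfies x² + y² + z² = xyz, then each of x, y, z is divisible by 3. -/
import Mathlib

/-- If (x,y,z) ∈ ℤ³ satisfies x² + y² + z² = xyz, then 3 divides x, y and z. -/
theorem markoff_div_three (x y z : ℤ) (h : x ^ 2 + y ^ 2 + z ^ 2 = x * y * z) :
    3 ∣ x ∧ 3 ∣ y ∧ 3 ∣ z := by
  have h3 : ∀ a b c : ZMod 3, a ^ 2 + b ^ 2 + c ^ 2 = a * b * c → a = 0 ∧ b = 0 ∧ c = 0 := by
    decide
  have := h3 (x : ZMod 3) y z (by exact_mod_cast congrArg (Int.cast : ℤ → ZMod 3) h)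
  exact ⟨(ZMod.intCast_zmod_eq_zero_iff_dvd x 3).mp this.1,
    (ZMod.intCast_zmod_eq_zero_iff_dvd y 3).mp this.2.1,
    (ZMod.intCast_zmod_eq_zero_iff_dvd z 3).mp this.2.2⟩
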